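/- Assume the deterministic Skorokhod setup: f : ℝ → ℝ is 1-Lipschitz, D = {(x₁,x₂) ∈ ℝ² : x₂ > f(x₁)}, K = {(x₁,x₂) ∈ ℝ² : x₂ > |x₁|} with closure K̄ = {x₂ ≥ |x₁|}; X, Y : [0,∞) → ℝ² are continuous, take values in the closure D̄ = {x₂ ≥ f(x₁)}, and satisfy X₀ = Y₀; moreover X_t = X₀ + w_t + A_t and Y_t = Y₀ + w_t + B_t for all t ≥ 0, where w, A, B : [0,∞) → ℝ² are continuous with w₀ = A₀ = B₀ = 0, A_t − A_s ∈ K̄ and B_t − B_s ∈ K̄ whenever 0 ≤ s ≤ t, A is constant on every interval on which X remains in D, and B is constant on every interval on which Y remains in D. Write X_t = (X¹_t, X²_t) and Y_t = (Y¹_t, Y²_t). Then for every t ≥ 0, if X¹_t = Y¹_t then X_t = Y_t. -/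

import Mathlib

/-!
The difference `X - Y` never enters the open cone `K`. Otherwise, go back to the last time `s`
before `t` at which `X - Y ∉ K`. On `(s, t)` we have `X - Y ∈ K` and `Y ∈ D̄`; since `f` is
1-Lipschitz, `D̄ + K ⊆ D`, so `X` stays in `D` and `A` is constant on `[s, t]`. Hence
`X_t - Y_t = (X_s - Y_s) - (B_t - B_s)`, and `(ℝ² \ K) - K̄ ⊆ ℝ² \ K` because `K + K̄ ⊆ K`.
By symmetry `Y - X ∉ K` as well, and a vector with vanishing first coordinate lying neither in
`K` nor in `-K` is zero.
-/

open Set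

theorem exists_last_mem_of_continuousOn {α : Type*} [TopologicalSpace α] {g : ℝ → α}
    {C : Set α} {a b : ℝ} (hab : a ≤ b) (hg : ContinuousOn g (Icc a b)) (hC : IsClosed C)
    (ha : g a ∈ C) : ∃ s ∈ Icc a b, g s ∈ C ∧ ∀ u ∈ Ioc s b, g u ∉ C := by
  set S := Icc a b ∩ g ⁻¹' C
  have hS : IsClosed S := hg.preimage_isClosed_of_isClosed isClosed_Icc hC
  have hbdd : BddAbove S := ⟨b, fun u hu => hu.1.2⟩
  have hsS : sSup S ∈ S := hS.csSup_mem ⟨a, ⟨left_mem_Icc.2 hab, ha⟩⟩ hbdd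
  refine ⟨sSup S, hsS.1, hsS.2, fun u hu hgu => ?_⟩
  have huS : u ∈ S := ⟨⟨hsS.1.1.trans hu.1.le, hu.2⟩, hgu⟩
  exact (le_csSup hbdd huS).not_gt hu.1

namespace Skorokhod

def cone : Set (ℝ × ℝ) := {z | |z.1| < z.2}

def closedCone : Set (ℝ × ℝ) := {z | |z.1| ≤ z.2}

theorem isOpen_cone : IsOpen cone :=
  isOpen_lt (continuous_abs.comp continuous_fst) continuous_snd

theorem zero_notMem_cone : (0 : ℝ × ℝ) ∉ cone := by
  simp [cone]

theorem add_mem_cone {a b : ℝ × ℝ} (ha : a ∈ cone) (hb : b ∈ closedCone) : a + b ∈ cone :=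
  calc |(a + b).1| ≤ |a.1| + |b.1| := abs_add_le _ _
    _ < a.2 + b.2 := add_lt_add_of_lt_of_le ha hb

theorem sub_notMem_cone {z k : ℝ × ℝ} (hz : z ∉ cone) (hk : k ∈ closedCone) : z - k ∉ cone :=
  fun h => hz (by simpa using add_mem_cone h hk)

theorem lt_of_sub_mem_cone {f : ℝ → ℝ} (hf : LipschitzWith 1 f) {x y : ℝ × ℝ}
    (hy : f y.1 ≤ y.2) (hxy : x - y ∈ cone) : f x.1 < x.2 := by
  have hlip : f x.1 - f y.1 ≤ |x.1 - y.1| :=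
    (le_abs_self _).trans (by simpa [Real.dist_eq] using hf.dist_le_mul x.1 y.1)
  have hcone : |x.1 - y.1| < x.2 - y.2 := hxy
  linarith

end Skorokhod

open Skorokhod

theorem sub_notMem_cone_of_skorokhod {f : ℝ → ℝ} (hf : LipschitzWith 1 f)
    {X Y A B : ℝ → ℝ × ℝ}
    (hXc : ContinuousOn X (Ici 0)) (hYc : ContinuousOn Y (Ici 0))
    (hYD : ∀ t, 0 ≤ t → f (Y t).1 ≤ (Y t).2)
    (h0 : X 0 = Y 0) (hdiff : ∀ t, 0 ≤ t → X t - Y t = A t - B t)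
    (hBincr : ∀ s t, 0 ≤ s → s ≤ t → B t - B s ∈ closedCone)
    (hAconst : ∀ s t, 0 ≤ s → s ≤ t →
      (∀ u, u ∈ Ioo s t → f (X u).1 < (X u).2) → A t = A s)
    {t : ℝ} (ht : 0 ≤ t) : X t - Y t ∉ cone := by
  obtain ⟨s, ⟨hs0, hst⟩, hs, hlast⟩ :=
    exists_last_mem_of_continuousOn (g := fun u => X u - Y u) ht
      ((hXc.sub hYc).mono Icc_subset_Ici_self) isOpen_cone.isClosed_compl
      (by simpa [h0] using zero_notMem_cone)
  have hXinD : ∀ u ∈ Ioo s t, f (X u).1 < (X u).2 := fun u hu =>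
    lt_of_sub_mem_cone hf (hYD u (hs0.trans hu.1.le)) (not_not.1 (hlast u ⟨hu.1, hu.2.le⟩))
  have hstep : X t - Y t = (X s - Y s) - (B t - B s) := by
    rw [hdiff t ht, hdiff s hs0, hAconst s t hs0 hst hXinD]
    abel
  rw [hstep]
  exact sub_notMem_cone hs (hBincr s t hs0 hst)

theorem eq_of_fst_eq_general
    (f : ℝ → ℝ) (hf : LipschitzWith 1 f)
    (X Y w A B : ℝ → ℝ × ℝ)
    (hXc : ContinuousOn X (Set.Ici 0)) (hYc : ContinuousOn Y (Set.Ici 0))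
    (hXD : ∀ t, 0 ≤ t → f (X t).1 ≤ (X t).2)
    (hYD : ∀ t, 0 ≤ t → f (Y t).1 ≤ (Y t).2)
    (h0 : X 0 = Y 0)
    (hXeq : ∀ t, 0 ≤ t → X t = X 0 + w t + A t)
    (hYeq : ∀ t, 0 ≤ t → Y t = Y 0 + w t + B t)
    (hAincr : ∀ s t, 0 ≤ s → s ≤ t → |(A t - A s).1| ≤ (A t - A s).2)
    (hBincr : ∀ s t, 0 ≤ s → s ≤ t → |(B t - B s).1| ≤ (B t - B s).2)
    (hAconst : ∀ s t, 0 ≤ s → s ≤ t →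
      (∀ u, u ∈ Set.Ioo s t → f (X u).1 < (X u).2) → A t = A s)
    (hBconst : ∀ s t, 0 ≤ s → s ≤ t →
      (∀ u, u ∈ Set.Ioo s t → f (Y u).1 < (Y u).2) → B t = B s) :
    ∀ t, 0 ≤ t → (X t).1 = (Y t).1 → X t = Y t := by
  intro t ht hfst
  have hXY : ∀ u, 0 ≤ u → X u - Y u = A u - B u := fun u hu => by
    rw [hXeq u hu, hYeq u hu, h0]; abel
  have hYX : ∀ u, 0 ≤ u → Y u - X u = B u - A u := fun u hu => by
    rw [← neg_sub, hXY u hu, neg_sub]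
  have hle : ¬ |(X t - Y t).1| < (X t - Y t).2 :=
    sub_notMem_cone_of_skorokhod hf hXc hYc hYD h0 hXY hBincr hAconst ht
  have hge : ¬ |(Y t - X t).1| < (Y t - X t).2 :=
    sub_notMem_cone_of_skorokhod hf hYc hXc hXD h0.symm hYX hAincr hBconst ht
  simp only [Prod.fst_sub, Prod.snd_sub, hfst, sub_self, abs_zero, not_lt] at hle hge
  exact Prod.ext hfst (by linarith)

/-- Deterministic Skorokhod setup: if the first coordinates of two solutions
agree at time t, then the solutions agree at time t. -/
theorem eq_of_fst_eq
    (f : ℝ → ℝ) (hf : LipschitzWith 1 f)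
    (X Y w A B : ℝ → ℝ × ℝ)
    (hXc : ContinuousOn X (Set.Ici 0)) (hYc : ContinuousOn Y (Set.Ici 0))
    (hwc : ContinuousOn w (Set.Ici 0))
    (hAc : ContinuousOn A (Set.Ici 0)) (hBc : ContinuousOn B (Set.Ici 0))
    (hXD : ∀ t, 0 ≤ t → f (X t).1 ≤ (X t).2)
    (hYD : ∀ t, 0 ≤ t → f (Y t).1 ≤ (Y t).2)
    (h0 : X 0 = Y 0)
    (hXeq : ∀ t, 0 ≤ t → X t = X 0 + w t + A t)
    (hYeq : ∀ t, 0 ≤ t → Y t = Y 0 + w t + B t)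
    (hw0 : w 0 = 0) (hA0 : A 0 = 0) (hB0 : B 0 = 0)
    (hAincr : ∀ s t, 0 ≤ s → s ≤ t → |(A t - A s).1| ≤ (A t - A s).2)
    (hBincr : ∀ s t, 0 ≤ s → s ≤ t → |(B t - B s).1| ≤ (B t - B s).2)
    (hAconst : ∀ s t, 0 ≤ s → s ≤ t →
      (∀ u, u ∈ Set.Ioo s t → f (X u).1 < (X u).2) → A t = A s)
    (hBconst : ∀ s t, 0 ≤ s → s ≤ t →
      (∀ u, u ∈ Set.Ioo s t → f (Y u).1 < (Y u).2) → B t = B s) :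
    ∀ t, 0 ≤ t → (X t).1 = (Y t).1 → X t = Y t :=
  eq_of_fst_eq_general f hf X Y w A B hXc hYc hXD hYD h0 hXeq hYeq hAincr hBincr hAconst hBconst
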